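/- Assume in addition that b_{n+1}d_{n+2} − d_{n+1}b_{n+2} ≠ 0 on U, and define R̂ = (−1/(b_{n+1}d_{n+2} − d_{n+1}b_{n+2})) · (b_{n+1}, d_{n+1})ᵀ · (−d_{n+2}, b_{n+2}). Then for each i = 1, …, n, the partial derivative of R̂ with respect to t_i equals R̂ A_i (R̂ − I)/(t_i − 1) − (R̂ − I) A_i R̂ / t_i, where I is the 2×2 identity matrix. -/

import Mathlib

open Finset

noncomputable section

/-- Extend `t = (t₁, …, tₙ) : Fin n → ℂ` by the fixed points `t_{n+1} = 0` and
`t_{n+2} = 1` (0-based: indices `n` and `n+1` of `Fin (n+2)`). -/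
def ext (n : ℕ) (t : Fin n → ℂ) (j : Fin (n + 2)) : ℂ :=
  if h : (j : ℕ) < n then t ⟨j, h⟩ else if (j : ℕ) = n then 0 else 1

/-- Inclusion of indices `1, …, n` into `1, …, n+2` (0-based). -/
def inc (n : ℕ) : Fin n → Fin (n + 2) := Fin.castLE (by omega)

/-- The partial derivative `∂f/∂t_i` of a scalar function on `ℂⁿ`. -/
def pderiv (n : ℕ) (i : Fin n) (f : (Fin n → ℂ) → ℂ) (t : Fin n → ℂ) : ℂ :=
  fderiv ℂ f t (Pi.single i 1)

/-- `ρ = −(θ₁ + ⋯ + θ_{n+3})/2`. -/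
def rho (n : ℕ) (θ : Fin (n + 3) → ℂ) : ℂ := -(∑ j, θ j) / 2

/-- The constants `C_{ij} = −θ_iθ_j/2 + (θ_i² + θ_j²)/(2(n+1))
− (Σ_k θ_k²)/(2(n+1)(n+2))`. -/
def Cc (n : ℕ) (θ : Fin (n + 3) → ℂ) (i j : Fin (n + 2)) : ℂ :=
  -(θ (Fin.castSucc i) * θ (Fin.castSucc j)) / 2
    + (θ (Fin.castSucc i) ^ 2 + θ (Fin.castSucc j) ^ 2) / (2 * ((n : ℂ) + 1))
    - (∑ k, θ k ^ 2) / (2 * ((n : ℂ) + 1) * ((n : ℂ) + 2))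

/-- `H̃_i = Σ_{1 ≤ j ≤ n+2, j ≠ i} tr(A_i A_j)/(t_i − t_j)`. -/
def Htil (n : ℕ) (A : Fin (n + 2) → (Fin n → ℂ) → Matrix (Fin 2) (Fin 2) ℂ)
    (i : Fin n) (t : Fin n → ℂ) : ℂ :=
  ∑ j ∈ Finset.univ.filter (fun j => j ≠ inc n i),
    (A (inc n i) t * A j t).trace / (t i - ext n t j)

/-- `R̂ = (−1/(b_{n+1}d_{n+2} − d_{n+1}b_{n+2})) · (b_{n+1}, d_{n+1})ᵀ · (−d_{n+2}, b_{n+2})`,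
where `b_j = (A_j)₁₂` and `d_j = (A_j)₂₂`. -/
def Rhat (n : ℕ) (A : Fin (n + 2) → (Fin n → ℂ) → Matrix (Fin 2) (Fin 2) ℂ)
    (s : Fin n → ℂ) : Matrix (Fin 2) (Fin 2) ℂ :=
  (-(A ⟨n, by omega⟩ s 0 1 * A ⟨n + 1, by omega⟩ s 1 1
      - A ⟨n, by omega⟩ s 1 1 * A ⟨n + 1, by omega⟩ s 0 1)⁻¹) •
    Matrix.vecMulVec ![A ⟨n, by omega⟩ s 0 1, A ⟨n, by omega⟩ s 1 1]
      ![-(A ⟨n + 1, by omega⟩ s 1 1), A ⟨n + 1, by omega⟩ s 0 1]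

/-! `R̂` is the projection of `ℂ²` onto the line spanned by the second column of `A_{n+1}` along
the line spanned by the second column of `A_{n+2}`. Since `det A_j = 0`, these lines are the
images of `A_{n+1}` and `A_{n+2}`, so `R̂ A_{n+1} = A_{n+1}` and `R̂ A_{n+2} = 0` on `U`.
Differentiating these identities and inserting the Schlesinger equations for `A_{n+1}` and
`A_{n+2}` shows that `∂R̂/∂t_i` and the claimed right-hand side agree after right multiplication
by `A_{n+1}` and by `A_{n+2}`; as the two second columns form a basis, they are equal. -/

open Filter Topology Matrix

section Projection

variable {K : Type*} [Field K]

def det₂ (p q : Fin 2 → K) : K := p 0 * q 1 - p 1 * q 0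

/-- The projection onto `K ∙ p` along `K ∙ q`, when `det₂ p q ≠ 0`. -/
def projAlong (p q : Fin 2 → K) : Matrix (Fin 2) (Fin 2) K :=
  (-(det₂ p q)⁻¹) • vecMulVec ![p 0, p 1] ![-q 1, q 0]

lemma projAlong_mul_self_of_det_eq_zero {M : Matrix (Fin 2) (Fin 2) K} {q : Fin 2 → K}
    (hM : M.det = 0) (hMq : det₂ (fun k => M k 1) q ≠ 0) :
    projAlong (fun k => M k 1) q * M = M := by
  rw [det_fin_two] at hM
  replace hMq : M 0 1 * q 1 - M 1 1 * q 0 ≠ 0 := hMq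
  ext k l
  fin_cases k <;> fin_cases l <;>
    simp [projAlong, det₂, mul_apply, Fin.sum_univ_two] <;> grind

lemma projAlong_mul_eq_zero_of_det_eq_zero {N : Matrix (Fin 2) (Fin 2) K} {p : Fin 2 → K}
    (hN : N.det = 0) :
    projAlong p (fun k => N k 1) * N = 0 := by
  rw [det_fin_two] at hN
  ext k l
  fin_cases k <;> fin_cases l <;>
    simp [projAlong, det₂, mul_apply, Fin.sum_univ_two] <;> grind

lemma eq_zero_of_mul_eq_zero_of_mul_eq_zero {X M N : Matrix (Fin 2) (Fin 2) K}
    (hM : X * M = 0) (hN : X * N = 0) (hMN : det₂ (fun k => M k 1) (fun k => N k 1) ≠ 0) :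
    X = 0 := by
  replace hMN : M 0 1 * N 1 1 - M 1 1 * N 0 1 ≠ 0 := hMN
  ext k l
  have h₁ := congrFun (congrFun hM k) 1
  have h₂ := congrFun (congrFun hN k) 1
  simp only [mul_apply, Fin.sum_univ_two, Matrix.zero_apply] at h₁ h₂
  fin_cases l
  · exact (mul_eq_zero.mp (by linear_combination N 1 1 * h₁ - M 1 1 * h₂ :
      X k 0 * (M 0 1 * N 1 1 - M 1 1 * N 0 1) = 0)).resolve_right hMN
  · exact (mul_eq_zero.mp (by linear_combination M 0 1 * h₂ - N 0 1 * h₁ :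
      X k 1 * (M 0 1 * N 1 1 - M 1 1 * N 0 1) = 0)).resolve_right hMN

end Projection

section ProjectionDerivative

/- `R'` stands for the derivative of `R`, and `c • (X * P - P * X)`, `d • (X * Q - Q * X)` for
Schlesinger-type derivatives of `P`, `Q`; the hypotheses `h` are the product rule applied to
`R * P = P` and `R * Q = 0`. -/

variable {K α : Type*} [Field K] [Ring α] [Algebra K α]

lemma deriv_mul_eq_of_mul_eq_self {R R' P X : α} (c d : K) (hRP : R * P = P)
    (h : R' * P + R * (c • (X * P - P * X)) = c • (X * P - P * X)) :
    R' * P = (d • (R * X * (R - 1)) - c • ((R - 1) * X * R)) * P := by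
  rw [← sub_eq_zero]
  -- rearranged so that `hRP` and `h` apply verbatim
  have e : R' * P - (d • (R * X * (R - 1)) - c • ((R - 1) * X * R)) * P
      = R' * P + R * (c • (X * P - P * X)) - c • (X * P - P * X)
        + c • ((R * P - P) * X) - d • (R * X * (R * P - P))
        + c • ((R - 1) * X * (R * P - P)) := by
    simp only [mul_sub, sub_mul, smul_sub, mul_smul_comm, smul_mul_assoc, mul_one, one_mul,
      mul_assoc]
    abel
  rw [e, h, hRP]
  simp

lemma deriv_mul_eq_of_mul_eq_zero {R R' Q X : α} (c d : K) (hRQ : R * Q = 0)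
    (h : R' * Q + R * (d • (X * Q - Q * X)) = 0) :
    R' * Q = (d • (R * X * (R - 1)) - c • ((R - 1) * X * R)) * Q := by
  rw [← sub_eq_zero]
  have e : R' * Q - (d • (R * X * (R - 1)) - c • ((R - 1) * X * R)) * Q
      = R' * Q + R * (d • (X * Q - Q * X)) + d • (R * Q * X) - d • (R * X * (R * Q))
        + c • ((R - 1) * X * (R * Q)) := by
    simp only [mul_sub, sub_mul, smul_sub, mul_smul_comm, smul_mul_assoc, mul_one, one_mul,
      mul_assoc]
    abel
  rw [e, h, hRQ]
  simp

end ProjectionDerivative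

section Derivatives

variable {n : ℕ} {i : Fin n} {t : Fin n → ℂ}

lemma pderiv_mul {f g : (Fin n → ℂ) → ℂ} (hf : DifferentiableAt ℂ f t)
    (hg : DifferentiableAt ℂ g t) :
    pderiv n i (fun s => f s * g s) t = pderiv n i f t * g t + f t * pderiv n i g t := by
  simp only [pderiv, fderiv_fun_mul hf hg, _root_.add_apply, _root_.smul_apply, smul_eq_mul]
  ring

lemma pderiv_sum {ι : Type*} (u : Finset ι) {f : ι → (Fin n → ℂ) → ℂ}
    (hf : ∀ j ∈ u, DifferentiableAt ℂ (f j) t) :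
    pderiv n i (fun s => ∑ j ∈ u, f j s) t = ∑ j ∈ u, pderiv n i (f j) t := by
  simp only [pderiv, fderiv_fun_sum hf, _root_.sum_apply]

lemma differentiableAt_projAlong {p q : (Fin n → ℂ) → Fin 2 → ℂ}
    (hp : ∀ k, DifferentiableAt ℂ (fun s => p s k) t)
    (hq : ∀ k, DifferentiableAt ℂ (fun s => q s k) t) (hpq : det₂ (p t) (q t) ≠ 0) (k l : Fin 2) :
    DifferentiableAt ℂ (fun s => projAlong (p s) (q s) k l) t := by
  have hdet : DifferentiableAt ℂ (fun s => det₂ (p s) (q s)) t :=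
    ((hp 0).mul (hq 1)).sub ((hp 1).mul (hq 0))
  simp only [projAlong, Matrix.smul_apply, Matrix.vecMulVec_apply, smul_eq_mul]
  refine (hdet.inv hpq).neg.mul (DifferentiableAt.mul ?_ ?_) <;>
    fin_cases k <;> fin_cases l <;> simp [hp, hq]

variable {l m p : Type*}

def matPderiv (n : ℕ) (i : Fin n) (M : (Fin n → ℂ) → Matrix l m ℂ) (t : Fin n → ℂ) :
    Matrix l m ℂ :=
  Matrix.of fun k l => pderiv n i (fun s => M s k l) t

lemma matPderiv_congr {M N : (Fin n → ℂ) → Matrix l m ℂ} (h : ∀ᶠ s in 𝓝 t, M s = N s) :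
    matPderiv n i M t = matPderiv n i N t := by
  ext k k'
  have hkk' : (fun s => M s k k') =ᶠ[𝓝 t] fun s => N s k k' :=
    h.mono fun s hs => congrFun (congrFun hs k) k'
  simp only [matPderiv, Matrix.of_apply, pderiv, hkk'.fderiv_eq]

lemma matPderiv_const (C : Matrix l m ℂ) : matPderiv n i (fun _ => C) t = 0 := by
  ext k k'
  simp [matPderiv, pderiv]

lemma matPderiv_mul [Fintype m] {M : (Fin n → ℂ) → Matrix l m ℂ}
    {N : (Fin n → ℂ) → Matrix m p ℂ}
    (hM : ∀ k j, DifferentiableAt ℂ (fun s => M s k j) t)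
    (hN : ∀ j k, DifferentiableAt ℂ (fun s => N s j k) t) :
    matPderiv n i (fun s => M s * N s) t
      = matPderiv n i M t * N t + M t * matPderiv n i N t := by
  ext k k'
  simp only [matPderiv, Matrix.of_apply, Matrix.add_apply, Matrix.mul_apply]
  rw [pderiv_sum (f := fun j s => M s k j * N s j k') _ fun j _ => (hM k j).mul (hN j k'),
    ← Finset.sum_add_distrib]
  exact Finset.sum_congr rfl fun j _ => pderiv_mul (hM k j) (hN j k')

lemma matPderiv_mul_of_eventuallyEq [Fintype m] {M : (Fin n → ℂ) → Matrix l m ℂ}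
    {N : (Fin n → ℂ) → Matrix m p ℂ} {F : (Fin n → ℂ) → Matrix l p ℂ}
    (hM : ∀ k j, DifferentiableAt ℂ (fun s => M s k j) t)
    (hN : ∀ j k, DifferentiableAt ℂ (fun s => N s j k) t) (h : ∀ᶠ s in 𝓝 t, M s * N s = F s) :
    matPderiv n i M t * N t + M t * matPderiv n i N t = matPderiv n i F t := by
  rw [← matPderiv_mul hM hN, matPderiv_congr h]

end Derivatives

section Rhat

variable {n : ℕ} {A : Fin (n + 2) → (Fin n → ℂ) → Matrix (Fin 2) (Fin 2) ℂ} {s : Fin n → ℂ}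

lemma Rhat_eq_projAlong :
    Rhat n A s
      = projAlong (fun k => A ⟨n, by omega⟩ s k 1) (fun k => A ⟨n + 1, by omega⟩ s k 1) :=
  rfl

lemma Rhat_mul_self_of_det_eq_zero (hdet : (A ⟨n, by omega⟩ s).det = 0)
    (hden : det₂ (fun k => A ⟨n, by omega⟩ s k 1) (fun k => A ⟨n + 1, by omega⟩ s k 1) ≠ 0) :
    Rhat n A s * A ⟨n, by omega⟩ s = A ⟨n, by omega⟩ s := by
  rw [Rhat_eq_projAlong]
  exact projAlong_mul_self_of_det_eq_zero hdet hden

lemma Rhat_mul_eq_zero_of_det_eq_zero (hdet : (A ⟨n + 1, by omega⟩ s).det = 0) :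
    Rhat n A s * A ⟨n + 1, by omega⟩ s = 0 := by
  rw [Rhat_eq_projAlong]
  exact projAlong_mul_eq_zero_of_det_eq_zero hdet

end Rhat

lemma ext_n (n : ℕ) (t : Fin n → ℂ) : ext n t ⟨n, by omega⟩ = 0 := by
  simp [_root_.ext]

lemma ext_n_add_one (n : ℕ) (t : Fin n → ℂ) : ext n t ⟨n + 1, by omega⟩ = 1 := by
  simp [_root_.ext]

lemma ne_inc {n : ℕ} {j : Fin (n + 2)} (hj : n ≤ j) (i : Fin n) : j ≠ inc n i := by
  simp only [inc, ne_eq, Fin.ext_iff, Fin.val_castLE]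
  omega

/-- If moreover `b_{n+1}d_{n+2} − d_{n+1}b_{n+2} ≠ 0` on `U`, then
`∂R̂/∂t_i = R̂ A_i (R̂ − I)/(t_i − 1) − (R̂ − I) A_i R̂ / t_i` for `i = 1, …, n`. -/
theorem pderiv_Rhat
    (n : ℕ)
    (U : Set (Fin n → ℂ)) (hU : IsOpen U)
    (A : Fin (n + 2) → (Fin n → ℂ) → Matrix (Fin 2) (Fin 2) ℂ)
    (hHol : ∀ (j : Fin (n + 2)) (k l : Fin 2),
      DifferentiableOn ℂ (fun s => A j s k l) U)
    (hdet : ∀ t ∈ U, ∀ j, (A j t).det = 0)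
    (hSch1 : ∀ t ∈ U, ∀ (i : Fin n) (j : Fin (n + 2)), j ≠ inc n i →
      ∀ (k l : Fin 2),
        pderiv n i (fun s => A j s k l) t
          = ((t i - ext n t j)⁻¹ •
              (A (inc n i) t * A j t - A j t * A (inc n i) t)) k l)
    (hden : ∀ t ∈ U,
      A ⟨n, by omega⟩ t 0 1 * A ⟨n + 1, by omega⟩ t 1 1
        - A ⟨n, by omega⟩ t 1 1 * A ⟨n + 1, by omega⟩ t 0 1 ≠ 0) :
    ∀ t ∈ U, ∀ (i : Fin n) (k l : Fin 2),
      pderiv n i (fun s => Rhat n A s k l) t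
        = ((t i - 1)⁻¹ • (Rhat n A t * A (inc n i) t * (Rhat n A t - 1))
            - (t i)⁻¹ • ((Rhat n A t - 1) * A (inc n i) t * Rhat n A t)) k l := by
  intro t ht i k l
  suffices matPderiv n i (Rhat n A) t
      = (t i - 1)⁻¹ • (Rhat n A t * A (inc n i) t * (Rhat n A t - 1))
        - (t i)⁻¹ • ((Rhat n A t - 1) * A (inc n i) t * Rhat n A t) from
    congrFun (congrFun this k) l
  have hUt : U ∈ 𝓝 t := hU.mem_nhds ht
  have hA (j : Fin (n + 2)) (k l : Fin 2) : DifferentiableAt ℂ (fun s => A j s k l) t :=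
    (hHol j k l).differentiableAt hUt
  have hR (k l : Fin 2) : DifferentiableAt ℂ (fun s => Rhat n A s k l) t :=
    differentiableAt_projAlong (fun k => hA _ k 1) (fun k => hA _ k 1) (hden t ht) k l
  have hSch (j : Fin (n + 2)) (hj : n ≤ j) : matPderiv n i (A j) t
      = (t i - ext n t j)⁻¹ • (A (inc n i) t * A j t - A j t * A (inc n i) t) := by
    ext k l
    exact hSch1 t ht i j (ne_inc hj i) k l
  have hRP := matPderiv_mul_of_eventuallyEq (i := i) hR (hA ⟨n, by omega⟩)
    (eventually_of_mem hUt fun s hs => Rhat_mul_self_of_det_eq_zero (hdet s hs _) (hden s hs))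
  have hRQ := matPderiv_mul_of_eventuallyEq (i := i) (F := fun _ => 0) hR
    (hA ⟨n + 1, by omega⟩)
    (eventually_of_mem hUt fun s hs => Rhat_mul_eq_zero_of_det_eq_zero (hdet s hs _))
  rw [hSch _ le_rfl, ext_n, sub_zero] at hRP
  rw [hSch _ (Nat.le_succ n), ext_n_add_one, matPderiv_const] at hRQ
  rw [← sub_eq_zero]
  refine eq_zero_of_mul_eq_zero_of_mul_eq_zero ?_ ?_ (hden t ht)
  · rw [sub_mul, deriv_mul_eq_of_mul_eq_self _ (t i - 1)⁻¹
      (Rhat_mul_self_of_det_eq_zero (hdet t ht _) (hden t ht)) hRP, sub_self]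
  · rw [sub_mul, deriv_mul_eq_of_mul_eq_zero (t i)⁻¹ _
      (Rhat_mul_eq_zero_of_det_eq_zero (hdet t ht _)) hRQ, sub_self]
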